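/- If v_1, ..., v_{d²} ∈ ℂ^d are unit vectors satisfying |⟨v_i, v_j⟩|² = 1/(d+1) for all i ≠ j, then P_d = ((d+1)/(2d)) · Σ_{j=1}^{d²} (v_j ⊗ v_j)(v_j ⊗ v_j)*, where v_j ⊗ v_j ∈ ℂ^d ⊗ ℂ^d is the tensor product vector and (v_j ⊗ v_j)(v_j ⊗ v_j)* is the corresponding rank-one matrix on ℂ^d ⊗ ℂ^d. -/

import Mathlib

/-!
Put `T = ∑ⱼ (vⱼ ⊗ vⱼ)(vⱼ ⊗ vⱼ)*` and `c = (d + 1) / (2d)`. Both `P_d` and `T` are Hermitian, so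
`P_d = c T` as soon as the squared Frobenius norm
`‖P_d - c T‖² = tr P_d² - 2c tr (P_d T) + c² tr T²` vanishes. Writing `P_d = (1 + F) / 2` with the
flip `F` (`F² = 1`, `tr F = d`) gives `tr P_d² = tr P_d = d(d + 1)/2`; `P_d` fixes every
`vⱼ ⊗ vⱼ`, so `tr (P_d T) = ∑ⱼ ‖vⱼ‖⁴ = d²`; and `tr T² = ∑ⱼₖ |⟨vⱼ, vₖ⟩|⁴ = 2d³/(d + 1)` by
equiangularity. Then `d(d + 1)/2 - d(d + 1) + d(d + 1)/2 = 0`.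
-/

open Matrix

/-- The rank-one matrix `w w'*` on `ℂ^d ⊗ ℂ^d`, with entries `w_p * conj (w'_q)`. -/
noncomputable def outer2 {d : ℕ} (x y : Fin d × Fin d → ℂ) :
    Matrix (Fin d × Fin d) (Fin d × Fin d) ℂ :=
  fun p q => x p * (starRingEnd ℂ) (y q)

/-- The tensor product vector `x ⊗ y ∈ ℂ^d ⊗ ℂ^d`, identified with a function on pairs. -/
noncomputable def tensorVec {d : ℕ} (x y : Fin d → ℂ) : Fin d × Fin d → ℂ :=
  fun p => x p.1 * y p.2

/-- The orthogonal projection of `ℂ^d ⊗ ℂ^d` onto the symmetric subspace, determined by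
`P_d (e_k ⊗ e_l) = (1/2)(e_k ⊗ e_l + e_l ⊗ e_k)`. -/
noncomputable def symProj (d : ℕ) : Matrix (Fin d × Fin d) (Fin d × Fin d) ℂ :=
  fun p q => (if p = q then 1 else 0) / 2 + (if p = Prod.swap q then 1 else 0) / 2

open scoped InnerProductSpace

open scoped ComplexOrder in
theorem Matrix.IsHermitian.eq_ofReal_smul_of_trace_eq_zero {𝕜 n : Type*} [RCLike 𝕜] [Fintype n]
    {P T : Matrix n n 𝕜} (hP : P.IsHermitian) (hT : T.IsHermitian) {c : ℝ}
    (h : trace (P * P) - 2 * c * trace (P * T) + c ^ 2 * trace (T * T) = 0) :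
    P = (c : 𝕜) • T := by
  have hA : (P - (c : 𝕜) • T)ᴴ = P - (c : 𝕜) • T := by
    rw [conjTranspose_sub, conjTranspose_smul, hP.eq, hT.eq, RCLike.star_def, RCLike.conj_ofReal]
  rw [← sub_eq_zero, ← trace_conjTranspose_mul_self_eq_zero_iff, hA, ← h]
  simp only [sub_mul, mul_sub, smul_mul, Matrix.mul_smul, trace_sub, trace_smul, smul_eq_mul,
    trace_mul_comm T P]
  ring

theorem sum_sum_norm_inner_pow_four_of_equiangular {𝕜 E ι : Type*} [RCLike 𝕜]
    [NormedAddCommGroup E] [InnerProductSpace 𝕜 E] [Fintype ι] {v : ι → E} {a : ℝ}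
    (hv : ∀ i, ‖v i‖ = 1) (hang : ∀ i j, i ≠ j → ‖⟪v i, v j⟫_𝕜‖ ^ 2 = a) :
    ∑ i, ∑ j, ‖⟪v i, v j⟫_𝕜‖ ^ 4 = Fintype.card ι * (1 - a ^ 2) + Fintype.card ι ^ 2 * a ^ 2 := by
  classical
  have hterm : ∀ i j, ‖⟪v i, v j⟫_𝕜‖ ^ 4 = a ^ 2 + if i = j then 1 - a ^ 2 else 0 := by
    intro i j
    split_ifs with hij
    · subst hij
      rw [inner_self_eq_norm_sq_to_K, hv]
      simp
    · rw [add_zero, ← hang i j hij]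
      ring
  simp only [hterm, Finset.sum_add_distrib, Finset.sum_const, Finset.sum_ite_eq, Finset.mem_univ,
    if_true, Finset.card_univ, nsmul_eq_mul]
  ring

section Tensor

variable {d : ℕ}

theorem star_tensorVec (x y : Fin d → ℂ) : star (tensorVec x y) = tensorVec (star x) (star y) := by
  ext p
  simp [tensorVec]

theorem tensorVec_dotProduct_tensorVec (x y z w : Fin d → ℂ) :
    tensorVec x y ⬝ᵥ tensorVec z w = (x ⬝ᵥ z) * (y ⬝ᵥ w) := by
  simp only [dotProduct, tensorVec, Fintype.sum_prod_type, Finset.sum_mul_sum]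
  refine Finset.sum_congr rfl fun a _ => Finset.sum_congr rfl fun b _ => ?_
  ring

theorem isHermitian_outer2_self (x : Fin d × Fin d → ℂ) : (outer2 x x).IsHermitian := by
  ext p q
  simp [outer2, mul_comm]

theorem outer2_eq_vecMulVec (x y : Fin d × Fin d → ℂ) : outer2 x y = vecMulVec x (star y) := rfl

theorem trace_outer2_self_mul_outer2_self (x y : Fin d × Fin d → ℂ) :
    trace (outer2 x x * outer2 y y) = (y ⬝ᵥ star x) * (x ⬝ᵥ star y) := by
  rw [outer2_eq_vecMulVec, outer2_eq_vecMulVec, vecMulVec_mul_vecMulVec, trace_vecMulVec,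
    dotProduct_smul, smul_eq_mul, dotProduct_comm (star x)]

theorem trace_outer2_tensorVec_mul_outer2_tensorVec (x y : EuclideanSpace ℂ (Fin d)) :
    trace (outer2 (tensorVec x x) (tensorVec x x) * outer2 (tensorVec y y) (tensorVec y y)) =
      (‖⟪x, y⟫_ℂ‖ ^ 4 : ℝ) := by
  rw [trace_outer2_self_mul_outer2_self, star_tensorVec, star_tensorVec,
    tensorVec_dotProduct_tensorVec, tensorVec_dotProduct_tensorVec,
    ← EuclideanSpace.inner_eq_star_dotProduct, ← EuclideanSpace.inner_eq_star_dotProduct,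
    ← inner_conj_symm y x]
  push_cast
  rw [show (‖⟪x, y⟫_ℂ‖ : ℂ) ^ 4 = ((‖⟪x, y⟫_ℂ‖ : ℂ) ^ 2) ^ 2 by ring, ← Complex.mul_conj']
  ring

theorem trace_outer2_tensorVec (x : EuclideanSpace ℂ (Fin d)) :
    trace (outer2 (tensorVec x x) (tensorVec x x)) = (‖x‖ ^ 4 : ℝ) := by
  rw [outer2_eq_vecMulVec, trace_vecMulVec, star_tensorVec, tensorVec_dotProduct_tensorVec,
    ← EuclideanSpace.inner_eq_star_dotProduct, inner_self_eq_norm_sq_to_K,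
    RCLike.ofReal_eq_complex_ofReal]
  push_cast
  ring

end Tensor

def swapMatrix (d : ℕ) : Matrix (Fin d × Fin d) (Fin d × Fin d) ℂ :=
  Equiv.Perm.permMatrix ℂ (Equiv.prodComm (Fin d) (Fin d))

section SymProj

variable (d : ℕ)

theorem symProj_eq_smul_one_add_swapMatrix :
    symProj d = (2⁻¹ : ℂ) • (1 + swapMatrix d) := by
  ext p q
  simp [symProj, swapMatrix, one_apply, PEquiv.toMatrix_apply, Prod.swap_eq_iff_eq_swap]
  ring

theorem swapMatrix_mul_self : swapMatrix d * swapMatrix d = 1 := by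
  have hinv : (Equiv.prodComm (Fin d) (Fin d) : Equiv.Perm (Fin d × Fin d)) *
      Equiv.prodComm (Fin d) (Fin d) = 1 := Equiv.ext fun _ => rfl
  rw [swapMatrix, ← permMatrix_mul, hinv, permMatrix_one]

theorem isHermitian_swapMatrix : (swapMatrix d).IsHermitian := by
  rw [IsHermitian, swapMatrix, conjTranspose_permMatrix]
  rfl

theorem trace_swapMatrix : trace (swapMatrix d) = d := by
  rw [swapMatrix, trace, Fintype.sum_prod_type]
  simp [PEquiv.toMatrix_apply, Prod.ext_iff, eq_comm]

theorem isHermitian_symProj : (symProj d).IsHermitian := by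
  rw [symProj_eq_smul_one_add_swapMatrix]
  exact (isHermitian_one.add (isHermitian_swapMatrix d)).smul (by simp [IsSelfAdjoint])

theorem symProj_mul_self : symProj d * symProj d = symProj d := by
  rw [symProj_eq_smul_one_add_swapMatrix, smul_mul_smul, add_mul, mul_add, mul_add,
    swapMatrix_mul_self]
  simp only [mul_one, one_mul]
  rw [add_comm (swapMatrix d) 1, ← two_smul ℂ (1 + swapMatrix d), smul_smul]
  norm_num

theorem trace_symProj : trace (symProj d) = ((d : ℂ) ^ 2 + d) / 2 := by
  rw [symProj_eq_smul_one_add_swapMatrix, trace_smul, trace_add, trace_one, trace_swapMatrix]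
  simp
  ring

variable {d}

theorem symProj_mulVec_tensorVec_self (x : Fin d → ℂ) :
    symProj d *ᵥ tensorVec x x = tensorVec x x := by
  have hsymm : tensorVec x x ∘ Equiv.prodComm (Fin d) (Fin d) = tensorVec x x :=
    funext fun _ => mul_comm _ _
  rw [symProj_eq_smul_one_add_swapMatrix, smul_mulVec, add_mulVec, one_mulVec, swapMatrix,
    permMatrix_mulVec, hsymm, ← two_smul ℂ, smul_smul]
  simp

theorem symProj_mul_outer2_tensorVec_self (x : Fin d → ℂ) :
    symProj d * outer2 (tensorVec x x) (tensorVec x x) =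
      outer2 (tensorVec x x) (tensorVec x x) := by
  rw [outer2_eq_vecMulVec, mul_vecMulVec, symProj_mulVec_tensorVec_self]

end SymProj

theorem symProj_eq_sic_sum {d : ℕ}
    (v : Fin (d ^ 2) → EuclideanSpace ℂ (Fin d))
    (hv : ∀ i, ‖v i‖ = 1)
    (hang : ∀ i j, i ≠ j → ‖(inner ℂ (v i) (v j) : ℂ)‖ ^ 2 = 1 / (d + 1)) :
    symProj d =
      (((d : ℂ) + 1) / (2 * d)) •
        ∑ j, outer2 (tensorVec (v j) (v j)) (tensorVec (v j) (v j)) := by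
  rcases eq_or_ne d 0 with rfl | hd
  · ext p
    exact p.1.elim0
  set T := ∑ j, outer2 (tensorVec (v j) (v j)) (tensorVec (v j) (v j)) with hT
  have hPT : trace (symProj d * T) = d ^ 2 := by
    simp [hT, Finset.mul_sum, trace_sum, symProj_mul_outer2_tensorVec_self, trace_outer2_tensorVec,
      hv]
  have hTT : trace (T * T) = ((∑ j, ∑ k, ‖⟪v j, v k⟫_ℂ‖ ^ 4 : ℝ) : ℂ) := by
    simp only [hT, Finset.sum_mul_sum, trace_sum, trace_outer2_tensorVec_mul_outer2_tensorVec]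
    norm_cast
  rw [show ((d : ℂ) + 1) / (2 * d) = RCLike.ofReal (((d : ℝ) + 1) / (2 * d)) by simp]
  refine (isHermitian_symProj d).eq_ofReal_smul_of_trace_eq_zero
    (isSelfAdjoint_sum _ fun j _ => isHermitian_outer2_self _) ?_
  rw [symProj_mul_self, trace_symProj, hPT, hTT,
    sum_sum_norm_inner_pow_four_of_equiangular hv hang, Fintype.card_fin,
    RCLike.ofReal_eq_complex_ofReal]
  push_cast
  field_simp
  ring
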